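/- Let d ≥ 1, let k₁ < k₂ < ⋯ < k_d be positive integers, set 𝔎 = k₁ + ⋯ + k_d, and let p be an even positive integer. Then there exist constants C₁, C₂ > 0, depending only on d, p, k₁, …, k_d, such that for every positive integer N the following holds: if K ≥ 0 is a constant satisfying (∫_{[0,1]^d} |Σ_{|n|≤N} a_n e^{2πi(α₁ n^{k₁} + ⋯ + α_d n^{k_d})}|^p dα)^{1/p} ≤ K · (Σ_{|n|≤N} |a_n|²)^{1/2} for all complex numbers a_n (|n| ≤ N), then K ≥ max{C₁, C₂ · N^{(1/2)(1 − 2𝔎/p)}}. -/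

import Mathlib

open MeasureTheory Real

/-!
Two test sequences suffice. The unit mass at `n = 0` gives a sum of modulus one, hence `K ≥ 1`.
For the constant sequence `a ≡ 1`, all phases `α₁ n^{k₁} + ⋯ + α_d n^{k_d}` with `|n| ≤ N` stay
below `1/8` on the box `0 ≤ α_j ≤ (8 (d + 1) N^{k_j})⁻¹` around the origin, so the exponential sum
has real part at least `(2N + 1)/2 ≥ N` there. The box has volume `≍ N^{-𝔎}`, so the `Lᵖ` norm
is `≳ N^{1 - 𝔎/p}`, while the `ℓ²` norm of the coefficients is `√(2N + 1) ≍ N^{1/2}`.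
-/

section

variable {d : ℕ} (k : Fin d → ℕ) (N : ℕ)

noncomputable def weylSum (a : ℤ → ℂ) (α : Fin d → ℝ) : ℂ :=
  ∑ n ∈ Finset.Icc (-(N : ℤ)) N, a n *
    Complex.exp (2 * π * Complex.I * ∑ j, (α j : ℂ) * (n : ℂ) ^ (k j))

def smallPhaseBox : Set (Fin d → ℝ) :=
  Set.univ.pi fun j => Set.Icc 0 (1 / (8 * (d + 1) * (N : ℝ) ^ k j))

lemma exp_phase_eq_exp_ofReal_mul_I (α : Fin d → ℝ) (n : ℤ) :
    Complex.exp (2 * π * Complex.I * ∑ j, (α j : ℂ) * (n : ℂ) ^ (k j)) =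
      Complex.exp ((2 * π * ∑ j, α j * (n : ℝ) ^ (k j) : ℝ) * Complex.I) := by
  congr 1
  push_cast
  ring

lemma card_Icc_neg_self : (Finset.Icc (-(N : ℤ)) N).card = 2 * N + 1 := by
  rw [Int.card_Icc]
  omega

lemma continuous_weylSum (a : ℤ → ℂ) : Continuous (weylSum k N a) := by
  unfold weylSum
  fun_prop

lemma norm_weylSum_single_zero (α : Fin d → ℝ) : ‖weylSum k N (Pi.single 0 1) α‖ = 1 := by
  have h0 : (0 : ℤ) ∈ Finset.Icc (-(N : ℤ)) N := by simp
  rw [weylSum, Finset.sum_eq_single_of_mem 0 h0 fun n _ hn => by simp [hn], Pi.single_eq_same,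
    one_mul, exp_phase_eq_exp_ofReal_mul_I, Complex.norm_exp_ofReal_mul_I]

lemma volume_real_unitCube (ι : Type*) [Fintype ι] :
    volume.real (Set.univ.pi fun _ : ι => Set.Icc (0 : ℝ) 1) = 1 := by
  rw [measureReal_def, volume_pi_pi]
  simp

lemma volume_real_smallPhaseBox :
    volume.real (smallPhaseBox k N) = ((8 * (d + 1)) ^ d * (N : ℝ) ^ (∑ j, k j))⁻¹ := by
  rw [measureReal_def, smallPhaseBox, volume_pi_pi, ENNReal.toReal_prod]
  simp only [Real.volume_Icc, sub_zero]
  rw [Finset.prod_congr rfl fun j _ => ENNReal.toReal_ofReal (by positivity)]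
  simp only [one_div, Finset.prod_inv_distrib, Finset.prod_mul_distrib, Finset.prod_const,
    Finset.card_univ, Fintype.card_fin, Finset.prod_pow_eq_pow_sum, mul_pow]

lemma half_le_cos_of_abs_le_one {x : ℝ} (hx : |x| ≤ 1) : 1 / 2 ≤ cos x := by
  nlinarith [one_sub_sq_div_two_le_cos (x := x), sq_abs x, abs_nonneg x]

variable {k N}

lemma abs_phase_le_of_mem_smallPhaseBox (hN : 0 < N) {α : Fin d → ℝ}
    (hα : α ∈ smallPhaseBox k N) {n : ℤ} (hn : n ∈ Finset.Icc (-(N : ℤ)) N) :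
    |∑ j, α j * (n : ℝ) ^ (k j)| ≤ 1 / 8 := by
  have hnN : |(n : ℝ)| ≤ N := by
    rw [Finset.mem_Icc] at hn
    rw [abs_le]
    exact ⟨by exact_mod_cast hn.1, by exact_mod_cast hn.2⟩
  have hterm (j : Fin d) : |α j * (n : ℝ) ^ (k j)| ≤ 1 / (8 * (d + 1)) := by
    obtain ⟨hα₀, hα₁⟩ := hα j (Set.mem_univ j)
    rw [abs_mul, abs_pow, abs_of_nonneg hα₀]
    calc α j * |(n : ℝ)| ^ k j ≤ 1 / (8 * (d + 1) * (N : ℝ) ^ k j) * (N : ℝ) ^ k j :=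
          mul_le_mul hα₁ (pow_le_pow_left₀ (abs_nonneg _) hnN _) (by positivity) (by positivity)
      _ = 1 / (8 * (d + 1)) := by field_simp
  calc |∑ j, α j * (n : ℝ) ^ (k j)| ≤ ∑ j, |α j * (n : ℝ) ^ (k j)| :=
        Finset.abs_sum_le_sum_abs _ _
    _ ≤ ∑ _j : Fin d, 1 / (8 * (d + 1 : ℝ)) := Finset.sum_le_sum fun j _ => hterm j
    _ ≤ 1 / 8 := by
        rw [Finset.sum_const, Finset.card_univ, Fintype.card_fin, nsmul_eq_mul, mul_one_div,
          div_le_div_iff₀ (by positivity) (by norm_num)]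
        linarith

lemma nat_le_norm_weylSum_one (hN : 0 < N) {α : Fin d → ℝ} (hα : α ∈ smallPhaseBox k N) :
    (N : ℝ) ≤ ‖weylSum k N 1 α‖ := by
  have hre : ∀ n ∈ Finset.Icc (-(N : ℤ)) N, (1 / 2 : ℝ) ≤ ((1 : ℤ → ℂ) n *
      Complex.exp (2 * π * Complex.I * ∑ j, (α j : ℂ) * (n : ℂ) ^ (k j))).re := by
    intro n hn
    rw [Pi.one_apply, one_mul, exp_phase_eq_exp_ofReal_mul_I, Complex.exp_ofReal_mul_I_re]
    apply half_le_cos_of_abs_le_one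
    rw [abs_mul, abs_of_pos (by positivity : (0 : ℝ) < 2 * π)]
    nlinarith [abs_phase_le_of_mem_smallPhaseBox hN hα hn, pi_le_four, pi_pos,
      abs_nonneg (∑ j, α j * (n : ℝ) ^ (k j))]
  calc (N : ℝ) ≤ (Finset.Icc (-(N : ℤ)) N).card • (1 / 2 : ℝ) := by
        rw [card_Icc_neg_self, nsmul_eq_mul]
        push_cast
        linarith
    _ ≤ (weylSum k N 1 α).re := by
        rw [weylSum, Complex.re_sum]
        exact Finset.card_nsmul_le_sum _ _ _ hre
    _ ≤ ‖weylSum k N 1 α‖ := Complex.re_le_norm _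

lemma smallPhaseBox_subset_unitCube (hN : 0 < N) :
    smallPhaseBox k N ⊆ Set.univ.pi fun _ => Set.Icc 0 1 := by
  refine Set.pi_mono fun j _ => Set.Icc_subset_Icc le_rfl ?_
  have : (1 : ℝ) ≤ (N : ℝ) ^ k j := one_le_pow₀ (by exact_mod_cast hN)
  rw [div_le_one (by positivity)]
  nlinarith

lemma le_integral_norm_weylSum_one_rpow (hN : 0 < N) (p : ℕ) :
    (N : ℝ) ^ p * ((8 * (d + 1)) ^ d * (N : ℝ) ^ (∑ j, k j))⁻¹ ≤
      ∫ α in Set.univ.pi fun _ => Set.Icc 0 1, ‖weylSum k N 1 α‖ ^ (p : ℝ) := by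
  have hsub := smallPhaseBox_subset_unitCube (k := k) hN
  have hint : IntegrableOn (fun α => ‖weylSum k N 1 α‖ ^ (p : ℝ))
      (Set.univ.pi fun _ : Fin d => Set.Icc (0 : ℝ) 1) :=
    ((continuous_weylSum k N 1).norm.rpow_const fun _ => Or.inr p.cast_nonneg).continuousOn
      |>.integrableOn_compact (isCompact_univ_pi fun _ => isCompact_Icc)
  calc (N : ℝ) ^ p * ((8 * (d + 1)) ^ d * (N : ℝ) ^ (∑ j, k j))⁻¹
        = (N : ℝ) ^ (p : ℝ) * volume.real (smallPhaseBox k N) := by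
        rw [volume_real_smallPhaseBox, rpow_natCast]
    _ ≤ ∫ α in smallPhaseBox k N, ‖weylSum k N 1 α‖ ^ (p : ℝ) :=
        setIntegral_ge_of_const_le_real (MeasurableSet.univ_pi fun _ => measurableSet_Icc)
          (isCompact_univ_pi fun _ => isCompact_Icc).measure_lt_top.ne
          (fun α hα => rpow_le_rpow (by positivity) (nat_le_norm_weylSum_one hN hα) (by positivity))
          (hint.mono_set hsub)
    _ ≤ ∫ α in Set.univ.pi fun _ => Set.Icc 0 1, ‖weylSum k N 1 α‖ ^ (p : ℝ) :=
        setIntegral_mono_set hint (ae_of_all _ fun _ => by positivity) (ae_of_all _ hsub)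

lemma pow_mul_inv_rpow_inv_eq {c x : ℝ} (hc : 0 < c) (hx : 0 < x) {p d s : ℕ} (hp : p ≠ 0) :
    (x ^ p * (c ^ d * x ^ s)⁻¹) ^ (1 / (p : ℝ)) = c ^ (-(d : ℝ) / p) * x ^ (1 - (s : ℝ) / p) := by
  have hpow : x ^ p * (c ^ d * x ^ s)⁻¹ = (c ^ (-(d : ℝ) / p) * x ^ (1 - (s : ℝ) / p)) ^ p := by
    have hp' : (p : ℝ) ≠ 0 := Nat.cast_ne_zero.mpr hp
    rw [← rpow_natCast (_ * _), mul_rpow (by positivity) (by positivity), ← rpow_mul hc.le,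
      ← rpow_mul hx.le, div_mul_cancel₀ _ hp', sub_mul, div_mul_cancel₀ _ hp', one_mul,
      rpow_neg hc.le, rpow_sub hx, rpow_natCast, rpow_natCast, rpow_natCast, mul_inv]
    ring
  rw [hpow, one_div, pow_rpow_inv_natCast (by positivity) hp]

lemma two_mul_add_one_rpow_half_le {x : ℝ} (hx : 1 ≤ x) :
    (2 * x + 1) ^ (1 / 2 : ℝ) ≤ √3 * x ^ (1 / 2 : ℝ) := by
  rw [sqrt_eq_rpow, ← mul_rpow (by norm_num) (by linarith)]
  exact rpow_le_rpow (by linarith) (by linarith) (by norm_num)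

lemma le_of_rpow_le_mul_sqrt_two_mul_add_one {c x K : ℝ} (hc : 0 < c) (hx : 1 ≤ x)
    {p d s : ℕ} (hp : p ≠ 0)
    (h : (x ^ p * (c ^ d * x ^ s)⁻¹) ^ (1 / (p : ℝ)) ≤ K * (2 * x + 1) ^ (1 / 2 : ℝ)) :
    c ^ (-(d : ℝ) / p) / √3 * x ^ ((1 / 2 : ℝ) * (1 - 2 * s / p)) ≤ K := by
  have hx₀ : 0 < x := by linarith
  rw [pow_mul_inv_rpow_inv_eq hc hx₀ hp] at h
  refine le_of_mul_le_mul_right (le_trans ?_ h) (by positivity : 0 < (2 * x + 1) ^ (1 / 2 : ℝ))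
  calc c ^ (-(d : ℝ) / p) / √3 * x ^ ((1 / 2 : ℝ) * (1 - 2 * s / p)) * (2 * x + 1) ^ (1 / 2 : ℝ)
      ≤ c ^ (-(d : ℝ) / p) / √3 * x ^ ((1 / 2 : ℝ) * (1 - 2 * s / p)) * (√3 * x ^ (1 / 2 : ℝ)) :=
        mul_le_mul_of_nonneg_left (two_mul_add_one_rpow_half_le hx) (by positivity)
    _ = c ^ (-(d : ℝ) / p) * x ^ (1 - (s : ℝ) / p) := by
        rw [mul_mul_mul_comm, div_mul_cancel₀ _ (by positivity), ← rpow_add hx₀]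
        ring_nf

end

/-- Sharpness: any constant `K` for which the discrete restriction inequality at an
even exponent `p` holds for all coefficients satisfies
`K ≥ max{C₁, C₂ N^{(1/2)(1 - 2𝔎/p)}}`. -/
theorem discrete_restriction_sharpness
    (d : ℕ) (k : Fin d → ℕ)
    (p : ℕ) (hp : 0 < p) :
    ∃ C₁ C₂ : ℝ, 0 < C₁ ∧ 0 < C₂ ∧ ∀ N : ℕ, 0 < N → ∀ K : ℝ, 0 ≤ K →
      (∀ a : ℤ → ℂ,
        (∫ α in (Set.univ.pi fun _ : Fin d => Set.Icc (0:ℝ) 1),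
            ‖∑ n ∈ Finset.Icc (-(N:ℤ)) (N:ℤ), a n *
                Complex.exp (2 * Real.pi * Complex.I *
                  ∑ j : Fin d, (α j : ℂ) * (n : ℂ) ^ (k j))‖ ^ (p : ℝ)) ^ (1 / (p : ℝ))
        ≤ K * (∑ n ∈ Finset.Icc (-(N:ℤ)) (N:ℤ), ‖a n‖ ^ 2) ^ (1/2 : ℝ)) →
      max C₁ (C₂ * (N : ℝ) ^ ((1/2 : ℝ) * (1 - 2 * ((∑ j, k j : ℕ) : ℝ) / (p : ℝ)))) ≤ K := by
  refine ⟨1, (8 * (d + 1)) ^ (-(d : ℝ) / p) / √3, one_pos, by positivity,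
    fun N hN K _ hbound => max_le ?_ ?_⟩
  · have h : (∫ α in Set.univ.pi fun _ => Set.Icc (0 : ℝ) 1,
        ‖weylSum k N (Pi.single 0 1) α‖ ^ (p : ℝ)) ^ (1 / (p : ℝ)) ≤ _ := hbound (Pi.single 0 1)
    simp only [norm_weylSum_single_zero, one_rpow, setIntegral_const, volume_real_unitCube,
      smul_eq_mul, mul_one] at h
    rwa [Finset.sum_eq_single_of_mem 0 (by simp) fun n _ hn => by simp [hn], Pi.single_eq_same,
      norm_one, one_pow, one_rpow, mul_one] at h
  · have h := (rpow_le_rpow (by positivity) (le_integral_norm_weylSum_one_rpow hN p)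
      (by positivity)).trans (hbound 1)
    simp only [Pi.one_apply, norm_one, one_pow, Finset.sum_const, card_Icc_neg_self,
      nsmul_eq_mul, mul_one] at h
    push_cast at h
    exact le_of_rpow_le_mul_sqrt_two_mul_add_one (by positivity) (by exact_mod_cast hN) hp.ne' h
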